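/- The Kreweras complement K : NCP_n → NCP_n is the unique map on noncrossing partitions satisfying K(∅) = ∅ and K(P ⊔̄ (| * Q)) = K(P) * (| ⊔̲ K(Q)) for all noncrossing partitions P, Q; equivalently, K is the isomorphism between the two Catalan pair structures on NCP given by Cat'(P, Q) = P ⊔̄ (| * Q) and Cat(P, Q) = P * (| ⊔̲ Q). -/
import Mathlib


/-- `r` is (the equivalence relation of) a noncrossing partition of `{0, …, n-1}`. -/
def IsNCPartition (n : ℕ) (r : ℕ → ℕ → Prop) : Prop :=
  (∀ i, r i i ↔ i < n) ∧
  (∀ i j, r i j → r j i) ∧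
  (∀ i j k, r i j → r j k → r i k) ∧
  (∀ a b c d, a < b → b < c → c < d → r a c → r b d → r a b)

/-- The empty partition. -/
def emptyPart : ℕ → ℕ → Prop := fun _ _ => False

/-- The partition `|` of a one-element set. -/
def onePart : ℕ → ℕ → Prop := fun i j => i = 0 ∧ j = 0

/-- Shift a partition by `m`. -/
def shiftPart (m : ℕ) (r : ℕ → ℕ → Prop) : ℕ → ℕ → Prop :=
  fun i j => m ≤ i ∧ m ≤ j ∧ r (i - m) (j - m)

/-- Concatenation `P * Q` of a partition `P` of `[m]` with a partition `Q`. -/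
def concatPart (m : ℕ) (P Q : ℕ → ℕ → Prop) : ℕ → ℕ → Prop :=
  fun i j => P i j ∨ shiftPart m Q i j

/-- Right-merging `P ⊔̲ Q` of `P` of `[m]` with `Q` of `[n]`:
merge the last block of `P` with the last block of `Q` in `P * Q`. -/
def rmergePart (m n : ℕ) (P Q : ℕ → ℕ → Prop) : ℕ → ℕ → Prop :=
  fun i j => concatPart m P Q i j ∨
    (P i (m - 1) ∧ shiftPart m Q j (m + n - 1)) ∨
    (shiftPart m Q i (m + n - 1) ∧ P j (m - 1))

/-- Left-merging `P ⊔̄ Q` of `P` of `[m]` with `Q`: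
merge the first block of `P` with the first block of `Q` in `P * Q`. -/
def lmergePart (m : ℕ) (P Q : ℕ → ℕ → Prop) : ℕ → ℕ → Prop :=
  fun i j => concatPart m P Q i j ∨
    (P i 0 ∧ shiftPart m Q j m) ∨
    (shiftPart m Q i m ∧ P j 0)

/-- The interlaced partition `P ∪ Q` on `1, 1̃, 2, 2̃, …, n, ñ`:
`P` lives on even indices, `Q` on odd ones. -/
def interlacePart (P Q : ℕ → ℕ → Prop) : ℕ → ℕ → Prop := fun i j =>
  (i % 2 = 0 ∧ j % 2 = 0 ∧ P (i / 2) (j / 2)) ∨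
  (i % 2 = 1 ∧ j % 2 = 1 ∧ Q (i / 2) (j / 2))

/-- `Q` is the Kreweras complement of the noncrossing partition `P` of `[n]`:
`Q` is the largest noncrossing partition of `[n]` (for reverse refinement)
such that `P ∪ Q` is noncrossing on the interlaced set. -/
def IsKreweras (n : ℕ) (P Q : ℕ → ℕ → Prop) : Prop :=
  IsNCPartition n Q ∧ IsNCPartition (2 * n) (interlacePart P Q) ∧
  ∀ Q', IsNCPartition n Q' → IsNCPartition (2 * n) (interlacePart P Q') →
    ∀ i j, Q' i j → Q i j

section Aux

lemma ncp_bound {n : ℕ} {r : ℕ → ℕ → Prop} (h : IsNCPartition n r) {i j : ℕ}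
    (hij : r i j) : i < n ∧ j < n := by
  obtain ⟨h1, h2, h3, _⟩ := h
  exact ⟨(h1 i).1 (h3 i j i hij (h2 i j hij)), (h1 j).1 (h3 j i j (h2 i j hij) hij)⟩

lemma ncp_zero {r : ℕ → ℕ → Prop} (h : IsNCPartition 0 r) : r = emptyPart := by
  funext i j
  apply propext
  constructor
  · intro hij; exact absurd (ncp_bound h hij).1 (by omega)
  · intro hij; exact hij.elim

lemma kreweras_eq {n : ℕ} {P Q1 Q2 : ℕ → ℕ → Prop} (h1 : IsKreweras n P Q1)
    (h2 : IsKreweras n P Q2) : Q1 = Q2 := by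
  funext i j
  exact propext ⟨fun h => h2.2.2 Q1 h1.1 h1.2.1 i j h,
    fun h => h1.2.2 Q2 h2.1 h2.2.1 i j h⟩

/-- canonical form of `P ⊔̄ (| * Q)` -/
def Rone (m : ℕ) (P Q : ℕ → ℕ → Prop) : ℕ → ℕ → Prop := fun i j =>
  P i j ∨ (i = m ∧ j = m) ∨ (m + 1 ≤ i ∧ m + 1 ≤ j ∧ Q (i - (m+1)) (j - (m+1)))
    ∨ (P i 0 ∧ j = m) ∨ (i = m ∧ P j 0)

/-- canonical form of `K(P) * (| ⊔̲ K(Q))` -/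
def Rtwo (m n : ℕ) (P' Q' : ℕ → ℕ → Prop) : ℕ → ℕ → Prop := fun i j =>
  P' i j ∨ (i = m ∧ j = m) ∨ (m + 1 ≤ i ∧ m + 1 ≤ j ∧ Q' (i - (m+1)) (j - (m+1)))
    ∨ (i = m ∧ m + 1 ≤ j ∧ Q' (j - (m+1)) (n-1)) ∨ (m + 1 ≤ i ∧ Q' (i - (m+1)) (n-1) ∧ j = m)

lemma concat_one_iff (Q : ℕ → ℕ → Prop) (x y : ℕ) :
    concatPart 1 onePart Q x y ↔ (x = 0 ∧ y = 0) ∨ (1 ≤ x ∧ 1 ≤ y ∧ Q (x-1) (y-1)) := by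
  unfold concatPart shiftPart onePart
  constructor
  · rintro (⟨hx, hy⟩ | ⟨hx, hy, h⟩)
    · exact Or.inl ⟨hx, hy⟩
    · exact Or.inr ⟨hx, hy, h⟩
  · rintro (⟨hx, hy⟩ | ⟨hx, hy, h⟩)
    · exact Or.inl ⟨hx, hy⟩
    · exact Or.inr ⟨hx, hy, h⟩

lemma lmerge_eq (m : ℕ) (P Q : ℕ → ℕ → Prop) :
    lmergePart m P (concatPart 1 onePart Q) = Rone m P Q := by
  funext i j
  apply propext
  unfold lmergePart Rone
  constructor
  · rintro ((h | ⟨hi, hj, h⟩) | ⟨h, hj, _, h2⟩ | ⟨⟨hi, _, h2⟩, h⟩)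
    · exact Or.inl h
    · rw [concat_one_iff] at h
      rcases h with ⟨h1, h2⟩ | ⟨h1, h2, h⟩
      · exact Or.inr (Or.inl ⟨by omega, by omega⟩)
      · refine Or.inr (Or.inr (Or.inl ⟨by omega, by omega, ?_⟩))
        rw [Nat.sub_sub] at h; exact h
    · rw [concat_one_iff] at h2
      rcases h2 with ⟨h1, _⟩ | ⟨h1, h2, _⟩
      · exact Or.inr (Or.inr (Or.inr (Or.inl ⟨h, by omega⟩)))
      · omega
    · rw [concat_one_iff] at h2
      rcases h2 with ⟨h1, _⟩ | ⟨h1, h2, _⟩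
      · exact Or.inr (Or.inr (Or.inr (Or.inr ⟨by omega, h⟩)))
      · omega
  · rintro (h | ⟨hi, hj⟩ | ⟨hi, hj, h⟩ | ⟨h, hj⟩ | ⟨hi, h⟩)
    · exact Or.inl (Or.inl h)
    · refine Or.inl (Or.inr ⟨by omega, by omega, ?_⟩)
      rw [concat_one_iff]; exact Or.inl ⟨by omega, by omega⟩
    · refine Or.inl (Or.inr ⟨by omega, by omega, ?_⟩)
      rw [concat_one_iff]
      refine Or.inr ⟨by omega, by omega, ?_⟩
      rw [Nat.sub_sub]; exact h
    · refine Or.inr (Or.inl ⟨h, by omega, by omega, ?_⟩)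
      rw [concat_one_iff]; exact Or.inl ⟨by omega, by omega⟩
    · refine Or.inr (Or.inr ⟨⟨by omega, by omega, ?_⟩, h⟩)
      rw [concat_one_iff]; exact Or.inl ⟨by omega, by omega⟩

lemma rmerge_one_iff (n : ℕ) (KQ : ℕ → ℕ → Prop) (x y : ℕ) :
    rmergePart 1 n onePart KQ x y ↔ (x = 0 ∧ y = 0) ∨ (1 ≤ x ∧ 1 ≤ y ∧ KQ (x-1) (y-1))
      ∨ (x = 0 ∧ 1 ≤ y ∧ 1 ≤ n ∧ KQ (y-1) (n-1))
      ∨ (1 ≤ x ∧ 1 ≤ n ∧ KQ (x-1) (n-1) ∧ y = 0) := by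
  unfold rmergePart
  rw [concat_one_iff]
  unfold onePart shiftPart
  constructor
  · rintro ((h | h) | ⟨⟨hx, -⟩, hy, hn, h⟩ | ⟨⟨hx, hn, h⟩, hy, -⟩)
    · exact Or.inl h
    · exact Or.inr (Or.inl h)
    · have e : 1 + n - 1 - 1 = n - 1 := by omega
      rw [e] at h
      exact Or.inr (Or.inr (Or.inl ⟨hx, hy, by omega, h⟩))
    · have e : 1 + n - 1 - 1 = n - 1 := by omega
      rw [e] at h
      exact Or.inr (Or.inr (Or.inr ⟨hx, by omega, h, hy⟩))
  · rintro (h | h | ⟨hx, hy, hn, h⟩ | ⟨hx, hn, h, hy⟩)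
    · exact Or.inl (Or.inl h)
    · exact Or.inl (Or.inr h)
    · refine Or.inr (Or.inl ⟨⟨hx, rfl⟩, hy, by omega, ?_⟩)
      have e : 1 + n - 1 - 1 = n - 1 := by omega
      rw [e]; exact h
    · refine Or.inr (Or.inr ⟨⟨hx, by omega, ?_⟩, hy, rfl⟩)
      have e : 1 + n - 1 - 1 = n - 1 := by omega
      rw [e]; exact h

lemma concat_rmerge_eq (m n : ℕ) (KP KQ : ℕ → ℕ → Prop)
    (hb : ∀ x y, KQ x y → x < n ∧ y < n) :
    concatPart m KP (rmergePart 1 n onePart KQ) = Rtwo m n KP KQ := by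
  funext i j
  apply propext
  unfold concatPart shiftPart Rtwo
  rw [rmerge_one_iff]
  constructor
  · rintro (h | ⟨hi, hj, (⟨h1, h2⟩ | ⟨h1, h2, h⟩ | ⟨h1, h2, hn, h⟩ | ⟨h1, hn, h, h2⟩)⟩)
    · exact Or.inl h
    · exact Or.inr (Or.inl ⟨by omega, by omega⟩)
    · refine Or.inr (Or.inr (Or.inl ⟨by omega, by omega, ?_⟩))
      have e1 : i - m - 1 = i - (m+1) := by omega
      have e2 : j - m - 1 = j - (m+1) := by omega
      rw [e1, e2] at h; exact h
    · refine Or.inr (Or.inr (Or.inr (Or.inl ⟨by omega, by omega, ?_⟩)))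
      have e2 : j - m - 1 = j - (m+1) := by omega
      rw [e2] at h; exact h
    · refine Or.inr (Or.inr (Or.inr (Or.inr ⟨by omega, ?_, by omega⟩)))
      have e1 : i - m - 1 = i - (m+1) := by omega
      rw [e1] at h; exact h
  · rintro (h | ⟨hi, hj⟩ | ⟨hi, hj, h⟩ | ⟨hi, hj, h⟩ | ⟨hi, h, hj⟩)
    · exact Or.inl h
    · exact Or.inr ⟨by omega, by omega, Or.inl ⟨by omega, by omega⟩⟩
    · refine Or.inr ⟨by omega, by omega, Or.inr (Or.inl ⟨by omega, by omega, ?_⟩)⟩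
      have e1 : i - m - 1 = i - (m+1) := by omega
      have e2 : j - m - 1 = j - (m+1) := by omega
      rw [e1, e2]; exact h
    · have hn : 1 ≤ n := by have := (hb _ _ h).1; omega
      refine Or.inr ⟨by omega, by omega, Or.inr (Or.inr (Or.inl ⟨by omega, by omega, hn, ?_⟩))⟩
      have e2 : j - m - 1 = j - (m+1) := by omega
      rw [e2]; exact h
    · have hn : 1 ≤ n := by have := (hb _ _ h).1; omega
      refine Or.inr ⟨by omega, by omega, Or.inr (Or.inr (Or.inr ⟨by omega, hn, ?_, by omega⟩))⟩
      have e1 : i - m - 1 = i - (m+1) := by omega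
      rw [e1]; exact h

lemma ncp_Rone {m n : ℕ} {P Q : ℕ → ℕ → Prop} (hP : IsNCPartition m P)
    (hQ : IsNCPartition n Q) : IsNCPartition (m + 1 + n) (Rone m P Q) := by
  obtain ⟨hP1, hPs, hPt, hPx⟩ := hP
  obtain ⟨hQ1, hQs, hQt, hQx⟩ := hQ
  have Pb : ∀ {i j}, P i j → i < m ∧ j < m := fun h => ncp_bound ⟨hP1, hPs, hPt, hPx⟩ h
  have Qb : ∀ {i j}, Q i j → i < n ∧ j < n := fun h => ncp_bound ⟨hQ1, hQs, hQt, hQx⟩ h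
  refine ⟨?_, ?_, ?_, ?_⟩
  · intro i
    constructor
    · rintro (h | ⟨hi, -⟩ | ⟨hi, -, h⟩ | ⟨h, hi⟩ | ⟨hi, -⟩)
      · have := Pb h; omega
      · omega
      · have := Qb h; omega
      · omega
      · omega
    · intro h
      rcases Nat.lt_trichotomy i m with hi | hi | hi
      · exact Or.inl ((hP1 i).2 hi)
      · exact Or.inr (Or.inl ⟨hi, hi⟩)
      · exact Or.inr (Or.inr (Or.inl ⟨by omega, by omega, (hQ1 _).2 (by omega)⟩))
  · rintro i j (h | ⟨hi, hj⟩ | ⟨hi, hj, h⟩ | ⟨h, hj⟩ | ⟨hi, h⟩)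
    · exact Or.inl (hPs _ _ h)
    · exact Or.inr (Or.inl ⟨hj, hi⟩)
    · exact Or.inr (Or.inr (Or.inl ⟨hj, hi, hQs _ _ h⟩))
    · exact Or.inr (Or.inr (Or.inr (Or.inr ⟨hj, h⟩)))
    · exact Or.inr (Or.inr (Or.inr (Or.inl ⟨h, hi⟩)))
  · rintro i j l (h1 | ⟨hi, hj⟩ | ⟨hi1, hj1, h1⟩ | ⟨h1, hj⟩ | ⟨hi, h1⟩)
      (h2 | ⟨hj', hl⟩ | ⟨hj2, hl2, h2⟩ | ⟨h2, hl⟩ | ⟨hj', h2⟩)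
    · exact Or.inl (hPt _ _ _ h1 h2)
    · exact absurd (Pb h1).2 (by omega)
    · exact absurd (Pb h1).2 (by omega)
    · exact Or.inr (Or.inr (Or.inr (Or.inl ⟨hPt _ _ _ h1 h2, hl⟩)))
    · exact absurd (Pb h1).2 (by omega)
    · exact absurd (Pb h2).1 (by omega)
    · exact Or.inr (Or.inl ⟨hi, hl⟩)
    · omega
    · exact absurd (Pb h2).1 (by omega)
    · exact Or.inr (Or.inr (Or.inr (Or.inr ⟨hi, h2⟩)))
    · exact absurd (Pb h2).1 (by omega)
    · omega
    · exact Or.inr (Or.inr (Or.inl ⟨hi1, hl2, hQt _ _ _ h1 h2⟩))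
    · exact absurd (Pb h2).1 (by omega)
    · omega
    · exact absurd (Pb h2).1 (by omega)
    · exact Or.inr (Or.inr (Or.inr (Or.inl ⟨h1, hl⟩)))
    · omega
    · exact absurd (Pb h2).1 (by omega)
    · exact Or.inl (hPt _ _ _ h1 (hPs _ _ h2))
    · exact Or.inr (Or.inr (Or.inr (Or.inr ⟨hi, hPt _ _ _ (hPs _ _ h2) h1⟩)))
    · exact absurd (Pb h1).1 (by omega)
    · exact absurd (Pb h1).1 (by omega)
    · exact Or.inr (Or.inl ⟨hi, hl⟩)
    · exact absurd (Pb h1).1 (by omega)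
  · intro a b c d hab hbc hcd hac hbd
    rcases hac with h1 | ⟨ha, hc⟩ | ⟨ha, hc, h1⟩ | ⟨h1, hc⟩ | ⟨ha, h1⟩
    · rcases hbd with h2 | ⟨hb, hd⟩ | ⟨hb, hd, h2⟩ | ⟨h2, hd⟩ | ⟨hb, h2⟩
      · exact Or.inl (hPx a b c d hab hbc hcd h1 h2)
      · have := (Pb h1).2; omega
      · have := (Pb h1).2; omega
      · rcases Nat.eq_zero_or_pos a with ha0 | ha0
        · subst ha0; exact Or.inl (hPs _ _ h2)
        · have h0b := hPs _ _ h2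
          have h0a := hPx 0 a b c ha0 hab hbc h0b h1
          exact Or.inl (hPt a 0 b (hPs 0 a h0a) h0b)
      · have := (Pb h1).2; omega
    · omega
    · rcases hbd with h2 | ⟨hb, hd⟩ | ⟨hb, hd, h2⟩ | ⟨h2, hd⟩ | ⟨hb, h2⟩
      · have := (Pb h2).1; omega
      · omega
      · exact Or.inr (Or.inr (Or.inl ⟨ha, hb,
          hQx _ _ _ _ (by omega) (by omega) (by omega) h1 h2⟩))
      · have := (Pb h2).1; omega
      · omega
    · rcases hbd with h2 | ⟨hb, hd⟩ | ⟨hb, hd, h2⟩ | ⟨h2, hd⟩ | ⟨hb, h2⟩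
      · have := (Pb h2).2; omega
      · omega
      · omega
      · omega
      · omega
    · have := (Pb h1).1; omega

lemma ncp_Rtwo {m n : ℕ} {P' Q' : ℕ → ℕ → Prop} (hP : IsNCPartition m P')
    (hQ : IsNCPartition n Q') : IsNCPartition (m + 1 + n) (Rtwo m n P' Q') := by
  obtain ⟨hP1, hPs, hPt, hPx⟩ := hP
  obtain ⟨hQ1, hQs, hQt, hQx⟩ := hQ
  have Pb : ∀ {i j}, P' i j → i < m ∧ j < m := fun h => ncp_bound ⟨hP1, hPs, hPt, hPx⟩ h
  have Qb : ∀ {i j}, Q' i j → i < n ∧ j < n := fun h => ncp_bound ⟨hQ1, hQs, hQt, hQx⟩ h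
  refine ⟨?_, ?_, ?_, ?_⟩
  · intro i
    constructor
    · rintro (h | ⟨hi, -⟩ | ⟨hi, -, h⟩ | ⟨hi, -, -⟩ | ⟨hi, h, -⟩)
      · have := Pb h; omega
      · omega
      · have := Qb h; omega
      · omega
      · have := Qb h; omega
    · intro h
      rcases Nat.lt_trichotomy i m with hi | hi | hi
      · exact Or.inl ((hP1 i).2 hi)
      · exact Or.inr (Or.inl ⟨hi, hi⟩)
      · exact Or.inr (Or.inr (Or.inl ⟨by omega, by omega, (hQ1 _).2 (by omega)⟩))
  · rintro i j (h | ⟨hi, hj⟩ | ⟨hi, hj, h⟩ | ⟨hi, hj, h⟩ | ⟨hi, h, hj⟩)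
    · exact Or.inl (hPs _ _ h)
    · exact Or.inr (Or.inl ⟨hj, hi⟩)
    · exact Or.inr (Or.inr (Or.inl ⟨hj, hi, hQs _ _ h⟩))
    · exact Or.inr (Or.inr (Or.inr (Or.inr ⟨hj, h, hi⟩)))
    · exact Or.inr (Or.inr (Or.inr (Or.inl ⟨hj, hi, h⟩)))
  · rintro i j l (h1 | ⟨hi, hj⟩ | ⟨hi1, hj1, h1⟩ | ⟨hi, hj1, h1⟩ | ⟨hi1, h1, hj⟩)
      (h2 | ⟨hj', hl⟩ | ⟨hj2, hl2, h2⟩ | ⟨hj', hl2, h2⟩ | ⟨hj2, h2, hl⟩)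
    · exact Or.inl (hPt _ _ _ h1 h2)
    · exact absurd (Pb h1).2 (by omega)
    · exact absurd (Pb h1).2 (by omega)
    · exact absurd (Pb h1).2 (by omega)
    · exact absurd (Pb h1).2 (by omega)
    · exact absurd (Pb h2).1 (by omega)
    · exact Or.inr (Or.inl ⟨hi, hl⟩)
    · omega
    · exact Or.inr (Or.inr (Or.inr (Or.inl ⟨hi, hl2, h2⟩)))
    · omega
    · exact absurd (Pb h2).1 (by omega)
    · omega
    · exact Or.inr (Or.inr (Or.inl ⟨hi1, hl2, hQt _ _ _ h1 h2⟩))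
    · omega
    · exact Or.inr (Or.inr (Or.inr (Or.inr ⟨hi1, hQt _ _ _ h1 h2, hl⟩)))
    · exact absurd (Pb h2).1 (by omega)
    · omega
    · exact Or.inr (Or.inr (Or.inr (Or.inl ⟨hi, hl2, hQt _ _ _ (hQs _ _ h2) h1⟩)))
    · omega
    · exact Or.inr (Or.inl ⟨hi, hl⟩)
    · exact absurd (Pb h2).1 (by omega)
    · exact Or.inr (Or.inr (Or.inr (Or.inr ⟨hi1, h1, hl⟩)))
    · omega
    · exact Or.inr (Or.inr (Or.inl ⟨hi1, hl2, hQt _ _ _ h1 (hQs _ _ h2)⟩))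
    · omega
  · intro a b c d hab hbc hcd hac hbd
    rcases hac with h1 | ⟨ha, hc⟩ | ⟨ha, hc, h1⟩ | ⟨ha, hc1, h1⟩ | ⟨ha1, h1, hc⟩
    · rcases hbd with h2 | ⟨hb, hd⟩ | ⟨hb, hd, h2⟩ | ⟨hb, hd, h2⟩ | ⟨hb, h2, hd⟩
      · exact Or.inl (hPx a b c d hab hbc hcd h1 h2)
      · have := (Pb h1).2; omega
      · have := (Pb h1).2; omega
      · have := (Pb h1).2; omega
      · have := (Pb h1).2; omega
    · omega
    · rcases hbd with h2 | ⟨hb, hd⟩ | ⟨hb, hd, h2⟩ | ⟨hb, hd, h2⟩ | ⟨hb, h2, hd⟩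
      · have := (Pb h2).1; omega
      · omega
      · exact Or.inr (Or.inr (Or.inl ⟨ha, hb,
          hQx _ _ _ _ (by omega) (by omega) (by omega) h1 h2⟩))
      · omega
      · omega
    · rcases hbd with h2 | ⟨hb, hd⟩ | ⟨hb, hd, h2⟩ | ⟨hb, hd, h2⟩ | ⟨hb, h2, hd⟩
      · have := (Pb h2).1; omega
      · omega
      · refine Or.inr (Or.inr (Or.inr (Or.inl ⟨ha, by omega, ?_⟩)))
        have hd' : d - (m+1) ≤ n - 1 := by have := (Qb h2).2; omega
        rcases eq_or_lt_of_le hd' with he | he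
        · rw [← he]; exact h2
        · have hbc' := hQx (b - (m+1)) (c - (m+1)) (d - (m+1)) (n-1)
            (by omega) (by omega) (by omega) h2 h1
          exact hQt _ _ _ hbc' h1
      · omega
      · omega
    · omega

lemma inter_cross {N : ℕ} {A B : ℕ → ℕ → Prop}
    (h : IsNCPartition N (interlacePart A B)) {p q s t : ℕ}
    (hA : A p q) (hB : B s t) (h1 : p ≤ s) (h2 : s < q) (h3 : q ≤ t) : False := by
  have hx := h.2.2.2 (2*p) (2*s+1) (2*q) (2*t+1) (by omega) (by omega) (by omega)
    (Or.inl ⟨by omega, by omega, by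
      rw [show 2*p/2 = p by omega, show 2*q/2 = q by omega]; exact hA⟩)
    (Or.inr ⟨by omega, by omega, by
      rw [show (2*s+1)/2 = s by omega, show (2*t+1)/2 = t by omega]; exact hB⟩)
  rcases hx with ⟨h1', h2', -⟩ | ⟨h1', h2', -⟩ <;> omega

lemma inter_cross' {N : ℕ} {A B : ℕ → ℕ → Prop}
    (h : IsNCPartition N (interlacePart A B)) {p q s t : ℕ}
    (hB : B s t) (hA : A p q) (h1 : s < p) (h2 : p ≤ t) (h3 : t < q) : False := by
  have hx := h.2.2.2 (2*s+1) (2*p) (2*t+1) (2*q) (by omega) (by omega) (by omega)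
    (Or.inr ⟨by omega, by omega, by
      rw [show (2*s+1)/2 = s by omega, show (2*t+1)/2 = t by omega]; exact hB⟩)
    (Or.inl ⟨by omega, by omega, by
      rw [show 2*p/2 = p by omega, show 2*q/2 = q by omega]; exact hA⟩)
  rcases hx with ⟨h1', h2', -⟩ | ⟨h1', h2', -⟩ <;> omega

lemma interlace_ncp_of {k : ℕ} {A B : ℕ → ℕ → Prop} (hA : IsNCPartition k A)
    (hB : IsNCPartition k B)
    (h1 : ∀ p q s t, A p q → B s t → p ≤ s → s < q → q ≤ t → False)
    (h2 : ∀ s t p q, B s t → A p q → s < p → p ≤ t → t < q → False) :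
    IsNCPartition (2 * k) (interlacePart A B) := by
  have Ab : ∀ {i j}, A i j → i < k ∧ j < k := fun h => ncp_bound hA h
  have Bb : ∀ {i j}, B i j → i < k ∧ j < k := fun h => ncp_bound hB h
  refine ⟨?_, ?_, ?_, ?_⟩
  · intro x
    constructor
    · rintro (⟨hx, -, h⟩ | ⟨hx, -, h⟩)
      · have := Ab h; omega
      · have := Bb h; omega
    · intro hx
      rcases Nat.even_or_odd x with he | he
      · rw [Nat.even_iff] at he
        exact Or.inl ⟨by omega, by omega, (hA.1 _).2 (by omega)⟩
      · rw [Nat.odd_iff] at he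
        exact Or.inr ⟨by omega, by omega, (hB.1 _).2 (by omega)⟩
  · rintro i j (⟨hi, hj, h⟩ | ⟨hi, hj, h⟩)
    · exact Or.inl ⟨hj, hi, hA.2.1 _ _ h⟩
    · exact Or.inr ⟨hj, hi, hB.2.1 _ _ h⟩
  · rintro i j l (⟨hi, hj, h⟩ | ⟨hi, hj, h⟩) (⟨hj', hl, h'⟩ | ⟨hj', hl, h'⟩)
    · exact Or.inl ⟨hi, hl, hA.2.2.1 _ _ _ h h'⟩
    · omega
    · omega
    · exact Or.inr ⟨hi, hl, hB.2.2.1 _ _ _ h h'⟩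
  · rintro a b c d hab hbc hcd (⟨ha, hc, hac⟩ | ⟨ha, hc, hac⟩) (⟨hb, hd, hbd⟩ | ⟨hb, hd, hbd⟩)
    · exact Or.inl ⟨ha, hb, hA.2.2.2 _ _ _ _ (by omega) (by omega) (by omega) hac hbd⟩
    · exact (h1 (a/2) (c/2) (b/2) (d/2) hac hbd (by omega) (by omega) (by omega)).elim
    · exact (h2 (a/2) (c/2) (b/2) (d/2) hac hbd (by omega) (by omega) (by omega)).elim
    · exact Or.inr ⟨ha, hb, hB.2.2.2 _ _ _ _ (by omega) (by omega) (by omega) hac hbd⟩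

lemma main_h1 {m n : ℕ} {P Q KP KQ : ℕ → ℕ → Prop}
    (hP : IsNCPartition m P) (hQ : IsNCPartition n Q)
    (hKP : IsNCPartition m KP) (hKQ : IsNCPartition n KQ)
    (hIP : IsNCPartition (2*m) (interlacePart P KP))
    (hIQ : IsNCPartition (2*n) (interlacePart Q KQ)) :
    ∀ p q s t, Rone m P Q p q → Rtwo m n KP KQ s t →
      p ≤ s → s < q → q ≤ t → False := by
  intro p q s t h1 h2 hps hsq hqt
  rcases h1 with h1 | ⟨hp, hq⟩ | ⟨hp, hq, h1⟩ | ⟨h1, hq⟩ | ⟨hp, h1⟩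
  · rcases h2 with h2 | ⟨hs, ht⟩ | ⟨hs, ht, h2⟩ | ⟨hs, ht, h2⟩ | ⟨hs, h2, ht⟩
    · exact inter_cross hIP h1 h2 hps hsq hqt
    · have := (ncp_bound hP h1).2; omega
    · have := (ncp_bound hP h1).2; omega
    · have := (ncp_bound hP h1).2; omega
    · have := (ncp_bound hP h1).2; omega
  · omega
  · rcases h2 with h2 | ⟨hs, ht⟩ | ⟨hs, ht, h2⟩ | ⟨hs, ht, h2⟩ | ⟨hs, h2, ht⟩
    · have := (ncp_bound hKP h2).1; omega
    · omega
    · exact inter_cross hIQ h1 h2 (by omega) (by omega) (by omega)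
    · omega
    · omega
  · rcases h2 with h2 | ⟨hs, ht⟩ | ⟨hs, ht, h2⟩ | ⟨hs, ht, h2⟩ | ⟨hs, h2, ht⟩
    · have := (ncp_bound hKP h2).2; omega
    · omega
    · omega
    · omega
    · omega
  · have := (ncp_bound hP h1).1; omega

lemma main_h2 {m n : ℕ} {P Q KP KQ : ℕ → ℕ → Prop}
    (hP : IsNCPartition m P) (hQ : IsNCPartition n Q)
    (hKP : IsNCPartition m KP) (hKQ : IsNCPartition n KQ)
    (hIP : IsNCPartition (2*m) (interlacePart P KP))
    (hIQ : IsNCPartition (2*n) (interlacePart Q KQ)) :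
    ∀ s t p q, Rtwo m n KP KQ s t → Rone m P Q p q →
      s < p → p ≤ t → t < q → False := by
  intro s t p q h2 h1 hsp hpt htq
  rcases h2 with h2 | ⟨hs, ht⟩ | ⟨hs, ht, h2⟩ | ⟨hs, ht, h2⟩ | ⟨hs, h2, ht⟩
  · have hbK := ncp_bound hKP h2
    rcases h1 with h1 | ⟨hp, hq⟩ | ⟨hp, hq, h1⟩ | ⟨h1, hq⟩ | ⟨hp, h1⟩
    · exact inter_cross' hIP h2 h1 hsp hpt htq
    · omega
    · omega
    · exact inter_cross hIP (hP.2.1 _ _ h1) h2 (by omega) (by omega) (by omega)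
    · omega
  · rcases h1 with h1 | ⟨hp, hq⟩ | ⟨hp, hq, h1⟩ | ⟨h1, hq⟩ | ⟨hp, h1⟩
    · have := (ncp_bound hP h1).1; omega
    · omega
    · omega
    · have := (ncp_bound hP h1).1; omega
    · omega
  · rcases h1 with h1 | ⟨hp, hq⟩ | ⟨hp, hq, h1⟩ | ⟨h1, hq⟩ | ⟨hp, h1⟩
    · have := (ncp_bound hP h1).1; omega
    · omega
    · exact inter_cross' hIQ h2 h1 (by omega) (by omega) (by omega)
    · have := (ncp_bound hP h1).1; omega
    · omega
  · rcases h1 with h1 | ⟨hp, hq⟩ | ⟨hp, hq, h1⟩ | ⟨h1, hq⟩ | ⟨hp, h1⟩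
    · have := (ncp_bound hP h1).1; omega
    · omega
    · have hbq := (ncp_bound hQ h1).2
      exact inter_cross hIQ h1 h2 (by omega) (by omega) (by omega)
    · have := (ncp_bound hP h1).1; omega
    · omega
  · omega

/-- restriction of `T` to the part right of `m`. -/
def shiftDown (m : ℕ) (T : ℕ → ℕ → Prop) : ℕ → ℕ → Prop :=
  fun a b => T (a + m + 1) (b + m + 1)

/-- `T` restricted right of `m`, with the blocks of `t` and of the last element merged. -/
def barMerge (m n t : ℕ) (T : ℕ → ℕ → Prop) : ℕ → ℕ → Prop := fun a b =>
  T (a + m + 1) (b + m + 1) ∨ (T (a + m + 1) t ∧ T (m + n) (b + m + 1)) ∨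
    (T (a + m + 1) (m + n) ∧ T t (b + m + 1))

lemma Rone_shift {m : ℕ} {P Q : ℕ → ℕ → Prop} {p q : ℕ} (h : Q p q) :
    Rone m P Q (p + m + 1) (q + m + 1) := by
  refine Or.inr (Or.inr (Or.inl ⟨by omega, by omega, ?_⟩))
  rw [show p + m + 1 - (m+1) = p by omega, show q + m + 1 - (m+1) = q by omega]
  exact h

lemma max_right {m n : ℕ} {P Q T : ℕ → ℕ → Prop} (hQ : IsNCPartition n Q)
    (hT : IsNCPartition (m+1+n) T)
    (hIT : IsNCPartition (2*(m+1+n)) (interlacePart (Rone m P Q) T)) :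
    IsNCPartition n (shiftDown m T) ∧
      IsNCPartition (2*n) (interlacePart Q (shiftDown m T)) := by
  obtain ⟨t1, ts, tt, tx⟩ := hT
  have Tb : ∀ {i j}, T i j → i < m+1+n ∧ j < m+1+n := fun h => ncp_bound ⟨t1, ts, tt, tx⟩ h
  have h2 : IsNCPartition n (shiftDown m T) := by
    refine ⟨?_, ?_, ?_, ?_⟩
    · intro i
      constructor
      · intro h; have := Tb h; omega
      · intro h; exact (t1 _).2 (by omega)
    · intro i j h; exact ts _ _ h
    · intro i j l h1 h2; exact tt _ _ _ h1 h2
    · intro a b c d hab hbc hcd hac hbd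
      exact tx _ _ _ _ (by omega) (by omega) (by omega) hac hbd
  refine ⟨h2, interlace_ncp_of hQ h2 ?_ ?_⟩
  · intro p q s' u hpq hsu h1' h2' h3'
    exact inter_cross hIT (Rone_shift hpq) hsu (by omega) (by omega) (by omega)
  · intro s' u p q hsu hpq h1' h2' h3'
    exact inter_cross' hIT hsu (Rone_shift hpq) (by omega) (by omega) (by omega)

lemma max_bar {m n : ℕ} {P Q T : ℕ → ℕ → Prop} (hQ : IsNCPartition n Q)
    (hT : IsNCPartition (m+1+n) T)
    (hIT : IsNCPartition (2*(m+1+n)) (interlacePart (Rone m P Q) T))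
    {t : ℕ} (hmt : T m t) (hlt : m < t) :
    IsNCPartition n (barMerge m n t T) ∧
      IsNCPartition (2*n) (interlacePart Q (barMerge m n t T)) := by
  obtain ⟨t1, ts, tt, tx⟩ := hT
  have Tb : ∀ {i j}, T i j → i < m+1+n ∧ j < m+1+n := fun h => ncp_bound ⟨t1, ts, tt, tx⟩ h
  have hQ3 : IsNCPartition n (barMerge m n t T) := by
    refine ⟨?_, ?_, ?_, ?_⟩
    · intro i
      constructor
      · rintro (h | ⟨h, -⟩ | ⟨h, -⟩) <;> (have := Tb h; omega)
      · intro h; exact Or.inl ((t1 _).2 (by omega))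
    · rintro i j (h | ⟨h1, h2⟩ | ⟨h1, h2⟩)
      · exact Or.inl (ts _ _ h)
      · exact Or.inr (Or.inr ⟨ts _ _ h2, ts _ _ h1⟩)
      · exact Or.inr (Or.inl ⟨ts _ _ h2, ts _ _ h1⟩)
    · rintro i j l (h1 | ⟨h1a, h1b⟩ | ⟨h1a, h1b⟩) (h2 | ⟨h2a, h2b⟩ | ⟨h2a, h2b⟩)
      · exact Or.inl (tt _ _ _ h1 h2)
      · exact Or.inr (Or.inl ⟨tt _ _ _ h1 h2a, h2b⟩)
      · exact Or.inr (Or.inr ⟨tt _ _ _ h1 h2a, h2b⟩)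
      · exact Or.inr (Or.inl ⟨h1a, tt _ _ _ h1b h2⟩)
      · exact Or.inl (tt _ _ _ (tt _ _ _ (tt _ _ _ h1a (ts _ _ h2a)) (ts _ _ h1b)) h2b)
      · exact Or.inl (tt _ _ _ h1a h2b)
      · exact Or.inr (Or.inr ⟨h1a, tt _ _ _ h1b h2⟩)
      · exact Or.inl (tt _ _ _ h1a h2b)
      · exact Or.inl (tt _ _ _ h1a (tt _ _ _ (tt _ _ _ (ts _ _ h2a) (ts _ _ h1b)) h2b))
    · rintro a b c d hab hbc hcd (h1 | ⟨h1a, h1b⟩ | ⟨h1a, h1b⟩) (h2 | ⟨h2a, h2b⟩ | ⟨h2a, h2b⟩)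
      · exact Or.inl (tx _ _ _ _ (by omega) (by omega) (by omega) h1 h2)
      · have hmB : T m (b+m+1) := tt _ _ _ hmt (ts _ _ h2a)
        have hmA : T m (a+m+1) :=
          tx m (a+m+1) (b+m+1) (c+m+1) (by omega) (by omega) (by omega) hmB h1
        exact Or.inl (tt _ _ _ (ts _ _ hmA) hmB)
      · have hd := (Tb h2b).2
        exact Or.inl (tx (a+m+1) (b+m+1) (c+m+1) (m+n)
          (by omega) (by omega) (by omega) h1 h2a)
      · have hd := (Tb h2).2
        by_cases hD : d + m + 1 = m + n
        · exact Or.inr (Or.inl ⟨h1a, ts _ _ (hD ▸ h2)⟩)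
        · have hBC : T (b+m+1) (c+m+1) := tx (b+m+1) (c+m+1) (d+m+1) (m+n)
            (by omega) (by omega) (by omega) h2 (ts _ _ h1b)
          exact Or.inr (Or.inl ⟨h1a, tt _ _ _ h1b (ts _ _ hBC)⟩)
      · exact Or.inl (tt _ _ _ h1a (ts _ _ h2a))
      · exact Or.inr (Or.inl ⟨h1a, ts _ _ h2a⟩)
      · have hmC : T m (c+m+1) := tt _ _ _ hmt h1b
        have hmB : T m (b+m+1) :=
          tx m (b+m+1) (c+m+1) (d+m+1) (by omega) (by omega) (by omega) hmC h2
        exact Or.inr (Or.inr ⟨h1a, tt _ _ _ (ts _ _ hmt) hmB⟩)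
      · exact Or.inr (Or.inr ⟨h1a, ts _ _ h2a⟩)
      · exact Or.inl (tt _ _ _ h1a (ts _ _ h2a))
  refine ⟨hQ3, interlace_ncp_of hQ hQ3 ?_ ?_⟩
  · intro p q s' u hpq hsu h1' h2' h3'
    rcases hsu with h | ⟨ha, hb⟩ | ⟨ha, hb⟩
    · exact inter_cross hIT (Rone_shift hpq) h (by omega) (by omega) (by omega)
    · exact inter_cross' hIT (tt _ _ _ hmt (ts _ _ ha)) (Rone_shift hpq)
        (by omega) (by omega) (by omega)
    · have := (ncp_bound hQ hpq).2
      exact inter_cross hIT (Rone_shift hpq) ha (by omega) (by omega) (by omega)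
  · intro s' u p q hsu hpq h1' h2' h3'
    rcases hsu with h | ⟨ha, hb⟩ | ⟨ha, hb⟩
    · exact inter_cross' hIT h (Rone_shift hpq) (by omega) (by omega) (by omega)
    · have := (ncp_bound hQ hpq).2
      exact inter_cross hIT (Rone_shift hpq) (ts _ _ hb) (by omega) (by omega) (by omega)
    · exact inter_cross' hIT (tt _ _ _ hmt hb) (Rone_shift hpq)
        (by omega) (by omega) (by omega)

lemma main_core {m n : ℕ} {P Q KP KQ : ℕ → ℕ → Prop}
    (hP : IsNCPartition m P) (hQ : IsNCPartition n Q)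
    (hKP : IsKreweras m P KP) (hKQ : IsKreweras n Q KQ) :
    IsKreweras (m + 1 + n) (Rone m P Q) (Rtwo m n KP KQ) := by
  obtain ⟨hKPn, hIP, hPmax⟩ := hKP
  obtain ⟨hKQn, hIQ, hQmax⟩ := hKQ
  have hR1 : IsNCPartition (m+1+n) (Rone m P Q) := ncp_Rone hP hQ
  have hR2 : IsNCPartition (m+1+n) (Rtwo m n KP KQ) := ncp_Rtwo hKPn hKQn
  refine ⟨hR2, interlace_ncp_of hR1 hR2 (main_h1 hP hQ hKPn hKQn hIP hIQ)
    (main_h2 hP hQ hKPn hKQn hIP hIQ), ?_⟩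
  intro T hT hIT
  have Tb : ∀ {i j}, T i j → i < m+1+n ∧ j < m+1+n := fun h => ncp_bound hT h
  have key : ∀ s t, T s t → s ≤ t → Rtwo m n KP KQ s t := by
    intro s t hst hle
    rcases eq_or_lt_of_le hle with rfl | hlt
    · exact (hR2.1 s).2 (Tb hst).1
    have hnb : ¬(s < m ∧ m ≤ t) := by
      rintro ⟨h1', h2'⟩
      have hR0m : Rone m P Q 0 m :=
        Or.inr (Or.inr (Or.inr (Or.inl ⟨(hP.1 0).2 (by omega), rfl⟩)))
      exact inter_cross hIT hR0m hst (by omega) h1' h2'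
    by_cases htm : t < m
    · have hsm : s < m := by omega
      have hQ1 : IsNCPartition m (fun a b => a < m ∧ b < m ∧ T a b) := by
        refine ⟨?_, ?_, ?_, ?_⟩
        · intro i
          constructor
          · rintro ⟨h, -, -⟩; exact h
          · intro h; exact ⟨h, h, (hT.1 i).2 (by omega)⟩
        · rintro i j ⟨h1, h2, h3⟩; exact ⟨h2, h1, hT.2.1 _ _ h3⟩
        · rintro i j l ⟨h1, -, h3⟩ ⟨-, h5, h6⟩; exact ⟨h1, h5, hT.2.2.1 _ _ _ h3 h6⟩
        · rintro a b c d hab hbc hcd ⟨ha, hc, hac⟩ ⟨hb, hd, hbd⟩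
          exact ⟨ha, by omega, hT.2.2.2 _ _ _ _ hab hbc hcd hac hbd⟩
      have hIQ1 : IsNCPartition (2*m) (interlacePart P (fun a b => a < m ∧ b < m ∧ T a b)) := by
        refine interlace_ncp_of hP hQ1 ?_ ?_
        · rintro p q s' t' hpq ⟨-, -, hst'⟩ h1' h2' h3'
          exact inter_cross hIT (Or.inl hpq) hst' h1' h2' h3'
        · rintro s' t' p q ⟨-, -, hst'⟩ hpq h1' h2' h3'
          exact inter_cross' hIT hst' (Or.inl hpq) h1' h2' h3'
      exact Or.inl (hPmax _ hQ1 hIQ1 s t ⟨hsm, htm, hst⟩)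
    · have hsm : m ≤ s := by omega
      rcases eq_or_lt_of_le hsm with rfl | hs'
      · -- s = m : bar case
        have hbt := (Tb hst).2
        obtain ⟨hQ3, hIQ3⟩ := max_bar hQ hT hIT hst hlt
        have hQ3tn : barMerge m n t T (t-(m+1)) (n-1) := by
          refine Or.inr (Or.inl ⟨?_, ?_⟩)
          · rw [show t-(m+1)+m+1 = t by omega]; exact (hT.1 t).2 (by omega)
          · rw [show n-1+m+1 = m+n by omega]; exact (hT.1 _).2 (by omega)
        exact Or.inr (Or.inr (Or.inr (Or.inl ⟨rfl, by omega,
          hQmax _ hQ3 hIQ3 _ _ hQ3tn⟩)))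
      · -- m < s : right case
        obtain ⟨hQ2, hIQ2⟩ := max_right hQ hT hIT (P := P)
        refine Or.inr (Or.inr (Or.inl ⟨by omega, by omega, ?_⟩))
        refine hQmax _ hQ2 hIQ2 _ _ ?_
        show T _ _
        rw [show s-(m+1)+m+1 = s by omega, show t-(m+1)+m+1 = t by omega]
        exact hst
  intro i j hij
  rcases le_total i j with h | h
  · exact key i j hij h
  · exact hR2.2.1 _ _ (key j i (hT.2.1 _ _ hij) h)

lemma decomp {k : ℕ} {R : ℕ → ℕ → Prop} (hR : IsNCPartition k R) (hk : 0 < k) :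
    ∃ M N, ∃ Pl Qr : ℕ → ℕ → Prop, k = M + 1 + N ∧ IsNCPartition M Pl ∧
      IsNCPartition N Qr ∧ R = Rone M Pl Qr := by
  classical
  have h00 : R 0 0 := (hR.1 0).2 hk
  obtain ⟨M, hMlt, hM0, hMmax⟩ : ∃ M, M < k ∧ R 0 M ∧ ∀ j, R 0 j → j ≤ M := by
    refine ⟨Nat.findGreatest (fun j => R 0 j) (k-1), ?_,
      Nat.findGreatest_spec (m := 0) (by omega) h00,
      fun j hj => Nat.le_findGreatest (by have := (ncp_bound hR hj).2; omega) hj⟩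
    have := Nat.findGreatest_le (P := fun j => R 0 j) (k-1)
    omega
  have hsplit : ∀ i j, R i j → i ≤ M → M < j → False := by
    intro i j hij hi hj
    rcases eq_or_lt_of_le hi with rfl | hi'
    · exact absurd (hMmax j (hR.2.2.1 _ _ _ hM0 hij)) (by omega)
    · by_cases h0i : R 0 i
      · exact absurd (hMmax j (hR.2.2.1 _ _ _ h0i hij)) (by omega)
      · have hi0 : 0 < i := by
          rcases Nat.eq_zero_or_pos i with rfl | h
          · exact absurd h00 h0i
          · exact h
        exact h0i (hR.2.2.2 0 i M j hi0 hi' hj hM0 hij)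
  refine ⟨M, k - M - 1, fun i j => i < M ∧ j < M ∧ R i j,
    fun i j => R (i + M + 1) (j + M + 1), by omega, ?_, ?_, ?_⟩
  · refine ⟨?_, ?_, ?_, ?_⟩
    · intro i
      constructor
      · rintro ⟨h, -, -⟩; exact h
      · intro h; exact ⟨h, h, (hR.1 i).2 (by omega)⟩
    · rintro i j ⟨h1, h2, h3⟩; exact ⟨h2, h1, hR.2.1 _ _ h3⟩
    · rintro i j l ⟨h1, -, h3⟩ ⟨-, h5, h6⟩; exact ⟨h1, h5, hR.2.2.1 _ _ _ h3 h6⟩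
    · rintro a b c d hab hbc hcd ⟨ha, hc, hac⟩ ⟨hb, hd, hbd⟩
      exact ⟨ha, by omega, hR.2.2.2 _ _ _ _ hab hbc hcd hac hbd⟩
  · refine ⟨?_, ?_, ?_, ?_⟩
    · intro i
      constructor
      · intro h; have := ncp_bound hR h; omega
      · intro h; exact (hR.1 _).2 (by omega)
    · intro i j h; exact hR.2.1 _ _ h
    · intro i j l h1 h2; exact hR.2.2.1 _ _ _ h1 h2
    · intro a b c d hab hbc hcd hac hbd
      exact hR.2.2.2 _ _ _ _ (by omega) (by omega) (by omega) hac hbd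
  · funext i j
    apply propext
    constructor
    · intro h
      have hb := ncp_bound hR h
      by_cases hi : i ≤ M <;> by_cases hj : j ≤ M
      · rcases eq_or_lt_of_le hi with hiM | hiM <;> rcases eq_or_lt_of_le hj with hjM | hjM
        · exact Or.inr (Or.inl ⟨hiM, hjM⟩)
        · exact Or.inr (Or.inr (Or.inr (Or.inr ⟨hiM, hjM, by omega,
            hR.2.2.1 _ _ _ (hR.2.1 _ _ (hiM ▸ h)) (hR.2.1 _ _ hM0)⟩)))
        · exact Or.inr (Or.inr (Or.inr (Or.inl ⟨⟨hiM, by omega,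
            hR.2.2.1 _ _ _ (hjM ▸ h) (hR.2.1 _ _ hM0)⟩, hjM⟩)))
        · exact Or.inl ⟨hiM, hjM, h⟩
      · exact (hsplit i j h hi (by omega)).elim
      · exact (hsplit j i (hR.2.1 _ _ h) hj (by omega)).elim
      · refine Or.inr (Or.inr (Or.inl ⟨by omega, by omega, ?_⟩))
        show R (i - (M+1) + M + 1) (j - (M+1) + M + 1)
        rw [show i - (M+1) + M + 1 = i by omega, show j - (M+1) + M + 1 = j by omega]
        exact h
    · rintro (⟨-, -, h⟩ | ⟨hi, hj⟩ | ⟨hi, hj, h⟩ | ⟨⟨-, -, h⟩, hj⟩ | ⟨hi, -, -, h⟩)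
      · exact h
      · subst hi; subst hj; exact (hR.1 _).2 hMlt
      · have h' : R (i - (M+1) + M + 1) (j - (M+1) + M + 1) := h
        rw [show i - (M+1) + M + 1 = i by omega, show j - (M+1) + M + 1 = j by omega] at h'
        exact h'
      · subst hj; exact hR.2.2.1 _ _ _ h hM0
      · subst hi; exact hR.2.1 _ _ (hR.2.2.1 _ _ _ h hM0)
lemma ncp_empty : IsNCPartition 0 emptyPart :=
  ⟨fun i => ⟨fun h => h.elim, fun h => by omega⟩, fun _ _ h => h.elim,
    fun _ _ _ h _ => h.elim, fun _ _ _ _ _ _ _ h _ => h.elim⟩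

end Aux


/-- The Kreweras complement is the unique map on noncrossing partitions with
`K(∅) = ∅` and `K(P ⊔̄ (| * Q)) = K(P) * (| ⊔̲ K(Q))`; i.e. it is the isomorphism
between the two Catalan pair structures on NCP. -/
theorem kreweras_unique_recursion
    (Kr : ℕ → (ℕ → ℕ → Prop) → (ℕ → ℕ → Prop))
    (hKr : ∀ n P, IsNCPartition n P → IsKreweras n P (Kr n P)) :
    (Kr 0 emptyPart = emptyPart ∧
      ∀ (m n : ℕ) (P Q : ℕ → ℕ → Prop), IsNCPartition m P → IsNCPartition n Q →
        Kr (m + 1 + n) (lmergePart m P (concatPart 1 onePart Q))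
          = concatPart m (Kr m P) (rmergePart 1 n onePart (Kr n Q))) ∧
    ∀ Kr' : ℕ → (ℕ → ℕ → Prop) → (ℕ → ℕ → Prop),
      (Kr' 0 emptyPart = emptyPart ∧
        ∀ (m n : ℕ) (P Q : ℕ → ℕ → Prop), IsNCPartition m P → IsNCPartition n Q →
          Kr' (m + 1 + n) (lmergePart m P (concatPart 1 onePart Q))
            = concatPart m (Kr' m P) (rmergePart 1 n onePart (Kr' n Q))) →
      ∀ (n : ℕ) (P : ℕ → ℕ → Prop), IsNCPartition n P → Kr' n P = Kr n P := by
  have hbase : Kr 0 emptyPart = emptyPart := ncp_zero (hKr 0 emptyPart ncp_empty).1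
  have hrec : ∀ (m n : ℕ) (P Q : ℕ → ℕ → Prop), IsNCPartition m P → IsNCPartition n Q →
      Kr (m + 1 + n) (lmergePart m P (concatPart 1 onePart Q))
        = concatPart m (Kr m P) (rmergePart 1 n onePart (Kr n Q)) := by
    intro m n P Q hP hQ
    have hKP := hKr m P hP
    have hKQ := hKr n Q hQ
    rw [lmerge_eq, concat_rmerge_eq m n _ _ (fun x y h => ncp_bound hKQ.1 h)]
    exact kreweras_eq (hKr _ _ (ncp_Rone hP hQ)) (main_core hP hQ hKP hKQ)
  refine ⟨⟨hbase, hrec⟩, ?_⟩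
  intro Kr' h n
  obtain ⟨hb0', hrec'⟩ := h
  induction n using Nat.strong_induction_on with
  | _ n IH =>
    intro P hP
    rcases Nat.eq_zero_or_pos n with rfl | hn
    · rw [ncp_zero hP, hb0', hbase]
    · obtain ⟨M, N, Pl, Qr, hkeq, hPl, hQr, hReq⟩ := decomp hP hn
      subst hkeq
      rw [hReq, ← lmerge_eq, hrec' M N Pl Qr hPl hQr, hrec M N Pl Qr hPl hQr,
        IH M (by omega) Pl hPl, IH N (by omega) Qr hQr]
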